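/- Let G be a disk graph on n vertices with disk representation (D_v)_{v ∈ V(G)}. Then G contains a balanced separator S ⊆ V(G) such that some line of ℝ² intersects every disk D_v with v ∈ S; in particular, the subgraph induced by S is a linear disk graph. Concretely, one may take S to be the set of all disks meeting the horizontal line through the median of the y-coordinates of the centers. -/

import Mathlib

/-- Coordinate distance is at most the Euclidean distance. -/
lemma coord_abs_le_dist (x y : EuclideanSpace ℝ (Fin 2)) (i : Fin 2) :
    |x i - y i| ≤ dist x y := by
  rw [EuclideanSpace.dist_eq]
  have h1 : |x i - y i| = Real.sqrt (dist (x i) (y i) ^ 2) := by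
    rw [Real.sqrt_sq_eq_abs, Real.dist_eq, abs_abs]
  rw [h1]
  apply Real.sqrt_le_sqrt
  exact Finset.single_le_sum (f := fun j => dist (x j) (y j) ^ 2)
    (fun j _ => sq_nonneg _) (Finset.mem_univ i)

/-- Every disk graph contains a balanced separator `S` such that some line of
`ℝ²` intersects every disk of `S` (so `S` induces a linear disk graph).
A balanced separator: the remaining vertices split into `A` and `B`, each of
size at most `⌈n/2⌉`, with no edge between `A` and `B`. -/
theorem diskGraph_balanced_separator_linear
    {V : Type*} [Fintype V] (G : SimpleGraph V)
    (c : V → EuclideanSpace ℝ (Fin 2)) (r : V → ℝ)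
    (hr : ∀ v, 0 < r v)
    (hG : ∀ u v : V, u ≠ v → (G.Adj u v ↔
      (Metric.closedBall (c u) (r u) ∩ Metric.closedBall (c v) (r v)).Nonempty)) :
    ∃ S A B : Finset V,
      (∀ v : V, v ∈ S ∨ v ∈ A ∨ v ∈ B) ∧
      Disjoint S A ∧ Disjoint S B ∧ Disjoint A B ∧
      A.card ≤ (Fintype.card V + 1) / 2 ∧ B.card ≤ (Fintype.card V + 1) / 2 ∧
      (∀ a ∈ A, ∀ b ∈ B, ¬ G.Adj a b) ∧
      ∃ p d : EuclideanSpace ℝ (Fin 2), d ≠ 0 ∧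
        ∀ v ∈ S, ∃ t : ℝ, p + t • d ∈ Metric.closedBall (c v) (r v) := by
  classical
  by_cases hV : Nonempty V
  case neg =>
    refine ⟨∅, ∅, ∅, fun v => absurd ⟨v⟩ hV, by simp, by simp, by simp, by simp, by simp,
      by simp, EuclideanSpace.single 1 0, EuclideanSpace.single 0 1, ?_, by simp⟩
    intro h
    have := congrArg (fun x => x 0) h
    simp [EuclideanSpace.single_apply] at this
  case pos =>
  set n := Fintype.card V with hn
  have hn0 : 0 < n := Fintype.card_pos
  let e : V ≃ Fin n := Fintype.equivFin V
  let g : Fin n → ℝ := fun i => c (e.symm i) 1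
  let σ := Tuple.sort g
  have hmono : Monotone (g ∘ σ) := Tuple.monotone_sort g
  let idx : Fin n := ⟨n / 2, Nat.div_lt_self hn0 one_lt_two⟩
  let m : ℝ := g (σ idx)
  -- key index bounds
  have hlt : ∀ v : V, c v 1 < m → (σ⁻¹ (e v)) < idx := by
    intro v hv
    by_contra h
    push_neg at h
    have := hmono h
    simp only [Function.comp_apply, Equiv.Perm.coe_inv, Equiv.apply_symm_apply] at this
    have hg : g (e v) = c v 1 := by simp [g]
    rw [hg] at this
    exact absurd hv (not_lt.2 this)
  have hgt : ∀ v : V, m < c v 1 → idx < (σ⁻¹ (e v)) := by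
    intro v hv
    by_contra h
    push_neg at h
    have := hmono h
    simp only [Function.comp_apply, Equiv.Perm.coe_inv, Equiv.apply_symm_apply] at this
    have hg : g (e v) = c v 1 := by simp [g]
    rw [hg] at this
    exact absurd hv (not_lt.2 this)
  -- counting
  have hcard_lt : (Finset.univ.filter (fun v : V => c v 1 < m)).card ≤ n / 2 := by
    have h := Finset.card_le_card_of_injOn (fun v => σ⁻¹ (e v))
      (s := Finset.univ.filter (fun v : V => c v 1 < m)) (t := Finset.Iio idx)
      (fun v hv => by
        simp only [Finset.mem_filter] at hv
        exact Finset.mem_Iio.2 (hlt v (Finset.mem_filter.1 hv).2))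
      (fun a _ b _ hab => by
        have := congrArg (fun i => e.symm (σ i)) hab
        simpa using this)
    simpa [Fin.card_Iio] using h
  have hcard_gt : (Finset.univ.filter (fun v : V => m < c v 1)).card ≤ n - 1 - n / 2 := by
    have h := Finset.card_le_card_of_injOn (fun v => σ⁻¹ (e v))
      (s := Finset.univ.filter (fun v : V => m < c v 1)) (t := Finset.Ioi idx)
      (fun v hv => by
        simp only [Finset.mem_filter] at hv
        exact Finset.mem_Ioi.2 (hgt v (Finset.mem_filter.1 hv).2))
      (fun a _ b _ hab => by
        have := congrArg (fun i => e.symm (σ i)) hab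
        simpa using this)
    simpa [Fin.card_Ioi] using h
  -- the three sets
  set S : Finset V := Finset.univ.filter (fun v => |c v 1 - m| ≤ r v) with hS
  set A : Finset V := Finset.univ.filter (fun v => m < c v 1 ∧ ¬ |c v 1 - m| ≤ r v) with hA
  set B : Finset V := Finset.univ.filter (fun v => c v 1 < m ∧ ¬ |c v 1 - m| ≤ r v) with hB
  have hmemS : ∀ v, v ∈ S ↔ |c v 1 - m| ≤ r v := by intro v; simp [hS]
  have hmemA : ∀ v, v ∈ A ↔ m < c v 1 ∧ ¬ |c v 1 - m| ≤ r v := by intro v; simp [hA]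
  have hmemB : ∀ v, v ∈ B ↔ c v 1 < m ∧ ¬ |c v 1 - m| ≤ r v := by intro v; simp [hB]
  refine ⟨S, A, B, ?_, ?_, ?_, ?_, ?_, ?_, ?_, ?_⟩
  · intro v
    by_cases h : |c v 1 - m| ≤ r v
    · exact Or.inl ((hmemS v).2 h)
    · rcases lt_trichotomy (c v 1) m with h1 | h1 | h1
      · exact Or.inr (Or.inr ((hmemB v).2 ⟨h1, h⟩))
      · exact absurd (by rw [h1]; simpa using (hr v).le) h
      · exact Or.inr (Or.inl ((hmemA v).2 ⟨h1, h⟩))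
  · rw [Finset.disjoint_left]
    intro v hv hv'
    exact ((hmemA v).1 hv').2 ((hmemS v).1 hv)
  · rw [Finset.disjoint_left]
    intro v hv hv'
    exact ((hmemB v).1 hv').2 ((hmemS v).1 hv)
  · rw [Finset.disjoint_left]
    intro v hv hv'
    exact absurd (((hmemB v).1 hv').1.trans ((hmemA v).1 hv).1) (lt_irrefl _)
  · calc A.card ≤ (Finset.univ.filter (fun v : V => m < c v 1)).card := by
          apply Finset.card_le_card
          intro v hv
          simp only [Finset.mem_filter]
          exact ⟨Finset.mem_univ v, ((hmemA v).1 hv).1⟩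
      _ ≤ n - 1 - n / 2 := hcard_gt
      _ ≤ (n + 1) / 2 := by omega
  · calc B.card ≤ (Finset.univ.filter (fun v : V => c v 1 < m)).card := by
          apply Finset.card_le_card
          intro v hv
          simp only [Finset.mem_filter]
          exact ⟨Finset.mem_univ v, ((hmemB v).1 hv).1⟩
      _ ≤ n / 2 := hcard_lt
      _ ≤ (n + 1) / 2 := by omega
  · -- no edges between A and B
    intro a ha b hb hadj
    obtain ⟨ha1, ha2⟩ := (hmemA a).1 ha
    obtain ⟨hb1, hb2⟩ := (hmemB b).1 hb
    push_neg at ha2 hb2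
    have hra : r a < c a 1 - m := by
      rwa [abs_of_pos (by linarith)] at ha2
    have hrb : r b < m - c b 1 := by
      rw [abs_of_neg (by linarith)] at hb2; linarith
    have hne : a ≠ b := fun h => absurd (h ▸ ha1) (not_lt.2 hb1.le)
    obtain ⟨x, hxa, hxb⟩ := (hG a b hne).1 hadj
    have h1 : |x 1 - c a 1| ≤ r a := (coord_abs_le_dist x (c a) 1).trans
      (Metric.mem_closedBall.1 hxa)
    have h2 : |x 1 - c b 1| ≤ r b := (coord_abs_le_dist x (c b) 1).trans
      (Metric.mem_closedBall.1 hxb)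
    have l1 : c a 1 - r a ≤ x 1 := by
      have := (abs_le.1 h1).1; linarith
    have l2 : x 1 ≤ c b 1 + r b := by
      have := (abs_le.1 h2).2; linarith
    linarith
  · -- the line
    refine ⟨EuclideanSpace.single 1 m, EuclideanSpace.single 0 1, ?_, ?_⟩
    · intro h
      have := congrArg (fun x => x 0) h
      simp [EuclideanSpace.single_apply] at this
    · intro v hv
      have hvS := (hmemS v).1 hv
      refine ⟨c v 0, ?_⟩
      set q : EuclideanSpace ℝ (Fin 2) :=
        EuclideanSpace.single 1 m + c v 0 • EuclideanSpace.single 0 (1:ℝ) with hq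
      rw [Metric.mem_closedBall, EuclideanSpace.dist_eq]
      have h0 : q 0 = c v 0 := by
        simp [hq, PiLp.add_apply, PiLp.smul_apply, EuclideanSpace.single_apply]
      have h1 : q 1 = m := by
        simp [hq, PiLp.add_apply, PiLp.smul_apply, EuclideanSpace.single_apply]
      rw [Fin.sum_univ_two, h0, h1]
      have : dist (c v 0) (c v 0) ^ 2 + dist m (c v 1) ^ 2 = dist m (c v 1) ^ 2 := by
        simp
      rw [this]
      rw [Real.sqrt_sq_eq_abs, Real.dist_eq, abs_abs, abs_sub_comm]
      exact hvS
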